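/- Let S be a Clifford semigroup and s an idempotent-invariant solution on S. Then for all a,b ∈ S and every e ∈ E(S): θ_e(a·b) = θ_e(a)·(θ_e(a))⁻¹·θ_e(a·b), and θ_a(b) = (θ_e(a))⁻¹·θ_e(a·b). -/

import Mathlib

/-!
Multiplying the argument of `θ_p` by an idempotent does not change the value: by (P1) and
`E(S)`-invariance, `θ_p(q e) = θ_p(q) θ_{pq}(e) = θ_p(q) θ_{pq}(q⁻¹q) = θ_p(q)`. Feeding this into
(P2) shows the same for the index, so `θ_e` does not depend on the idempotent `e`, and
`u = θ_e(e)` is a central idempotent fixing every `θ_a(b)` from the left. Since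
`θ_e(a) θ_{ea}(a⁻¹) = θ_e(a a⁻¹) = u`, the element `x = θ_e(a)` satisfies `x⁻¹x = u`, and both
formulas follow from `θ_e(a) θ_{ea}(b) = θ_e(ab)`.
-/

structure IsPentagonSolution {S : Type*} [Mul S] (θ : S → S → S) : Prop where
  mul_theta_mul : ∀ a b c : S, θ a b * θ (a * b) c = θ a (b * c)
  theta_theta_mul : ∀ a b c : S, θ (θ a b) (θ (a * b) c) = θ b c

def IsIdempotentInvariant {S : Type*} [Mul S] (θ : S → S → S) : Prop :=
  ∀ a e f : S, IsIdempotentElem e → IsIdempotentElem f → θ a e = θ a f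

section

variable {S : Type*} [Semigroup S] {inv : S → S}

theorem isIdempotentElem_mul_inv (hinv : ∀ a : S, a * inv a * a = a) (a : S) :
    IsIdempotentElem (a * inv a) := by
  rw [IsIdempotentElem, ← mul_assoc, hinv]

theorem isIdempotentElem_inv_mul (hinv : ∀ a : S, a * inv a * a = a) (a : S) :
    IsIdempotentElem (inv a * a) := by
  rw [IsIdempotentElem, mul_assoc, ← mul_assoc a, hinv]

theorem inv_mul_self_eq_of_mul_eq (hinv : ∀ a : S, a * inv a * a = a)
    (hinvcomm : ∀ a : S, a * inv a = inv a * a) {x u y : S} (hxu : x * u = x) (hxy : x * y = u) :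
    inv x * x = u :=
  calc inv x * x = inv x * x * (x * y) := by rw [hxy, mul_assoc, hxu]
    _ = (x * inv x * x) * y := by rw [hinvcomm, ← mul_assoc, mul_assoc (inv x)]
    _ = u := by rw [hinv, hxy]

namespace IsPentagonSolution

variable {θ : S → S → S}

theorem theta_mul_idem (hθ : IsPentagonSolution θ) (hE : IsIdempotentInvariant θ)
    (hinv : ∀ a : S, a * inv a * a = a) (p q : S) {e : S} (he : IsIdempotentElem e) :
    θ p (q * e) = θ p q :=
  calc θ p (q * e) = θ p q * θ (p * q) (inv q * q) := by
        rw [← hθ.mul_theta_mul, hE _ _ _ he (isIdempotentElem_inv_mul hinv q)]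
    _ = θ p q := by rw [hθ.mul_theta_mul, ← mul_assoc, hinv]

theorem theta_idem_mul (hθ : IsPentagonSolution θ) (hE : IsIdempotentInvariant θ)
    (hinv : ∀ a : S, a * inv a * a = a)
    (hcentral : ∀ e : S, IsIdempotentElem e → ∀ a : S, e * a = a * e)
    (p q : S) {e : S} (he : IsIdempotentElem e) : θ p (e * q) = θ p q := by
  rw [hcentral e he, hθ.theta_mul_idem hE hinv p q he]

theorem theta_idem_mul_left (hθ : IsPentagonSolution θ) (hE : IsIdempotentInvariant θ)
    (hinv : ∀ a : S, a * inv a * a = a)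
    (hcentral : ∀ e : S, IsIdempotentElem e → ∀ a : S, e * a = a * e)
    (q c : S) {e : S} (he : IsIdempotentElem e) : θ (e * q) c = θ q c := by
  have h := hθ.theta_theta_mul e (e * q) c
  rw [hθ.theta_idem_mul hE hinv hcentral e q he, ← mul_assoc, he] at h
  rw [← h, hθ.theta_theta_mul]

theorem theta_idem_eq (hθ : IsPentagonSolution θ) (hE : IsIdempotentInvariant θ)
    (hinv : ∀ a : S, a * inv a * a = a)
    (hcentral : ∀ e : S, IsIdempotentElem e → ∀ a : S, e * a = a * e)
    (c : S) {e f : S} (he : IsIdempotentElem e) (hf : IsIdempotentElem f) : θ e c = θ f c := by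
  rw [← hθ.theta_idem_mul_left hE hinv hcentral e c hf, hcentral f hf,
    hθ.theta_idem_mul_left hE hinv hcentral f c he]

theorem theta_idem_self_mul (hθ : IsPentagonSolution θ) (hE : IsIdempotentInvariant θ)
    (hinv : ∀ a : S, a * inv a * a = a)
    (hcentral : ∀ e : S, IsIdempotentElem e → ∀ a : S, e * a = a * e)
    (c : S) {e f : S} (he : IsIdempotentElem e) (hf : IsIdempotentElem f) :
    θ e e * θ f c = θ f c := by
  rw [← hθ.theta_idem_eq hE hinv hcentral c he hf]
  calc θ e e * θ e c = θ e e * θ (e * e) c := by rw [he.eq]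
    _ = θ e c := by rw [hθ.mul_theta_mul, hθ.theta_idem_mul hE hinv hcentral e c he]

theorem isIdempotentElem_theta_idem (hθ : IsPentagonSolution θ) (hE : IsIdempotentInvariant θ)
    (hinv : ∀ a : S, a * inv a * a = a)
    (hcentral : ∀ e : S, IsIdempotentElem e → ∀ a : S, e * a = a * e)
    {e : S} (he : IsIdempotentElem e) : IsIdempotentElem (θ e e) :=
  hθ.theta_idem_self_mul hE hinv hcentral e he he

theorem theta_idem_mul_theta_idem (hθ : IsPentagonSolution θ) (hE : IsIdempotentInvariant θ)
    (hinv : ∀ a : S, a * inv a * a = a)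
    (hcentral : ∀ e : S, IsIdempotentElem e → ∀ a : S, e * a = a * e)
    (r : S) {e : S} (he : IsIdempotentElem e) : θ e e * θ r e = θ r e := by
  have hu := hθ.isIdempotentElem_theta_idem hE hinv hcentral he
  have hsplit : θ r e = θ r (inv r) * θ (r * inv r) r := by
    rw [hθ.mul_theta_mul, hE _ _ _ he (isIdempotentElem_inv_mul hinv r)]
  rw [hsplit, ← mul_assoc, hcentral _ hu, mul_assoc,
    hθ.theta_idem_self_mul hE hinv hcentral r he (isIdempotentElem_mul_inv hinv r)]

theorem theta_idem_mul_theta (hθ : IsPentagonSolution θ) (hE : IsIdempotentInvariant θ)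
    (hinv : ∀ a : S, a * inv a * a = a)
    (hcentral : ∀ e : S, IsIdempotentElem e → ∀ a : S, e * a = a * e)
    (a b : S) {e : S} (he : IsIdempotentElem e) : θ e e * θ a b = θ a b := by
  have hu := hθ.isIdempotentElem_theta_idem hE hinv hcentral he
  have habsorb : θ a b * θ (a * b) e = θ a b := by
    rw [hθ.mul_theta_mul, hθ.theta_mul_idem hE hinv a b he]
  rw [← habsorb, hcentral _ hu, mul_assoc, ← hcentral _ hu,
    hθ.theta_idem_mul_theta_idem hE hinv hcentral (a * b) he]

theorem inv_theta_mul_theta (hθ : IsPentagonSolution θ) (hE : IsIdempotentInvariant θ)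
    (hinv : ∀ a : S, a * inv a * a = a) (hinvcomm : ∀ a : S, a * inv a = inv a * a)
    (hcentral : ∀ e : S, IsIdempotentElem e → ∀ a : S, e * a = a * e)
    (a : S) {e : S} (he : IsIdempotentElem e) : inv (θ e a) * θ e a = θ e e := by
  refine inv_mul_self_eq_of_mul_eq hinv hinvcomm (y := θ (e * a) (inv a)) ?_ ?_
  · rw [← hcentral _ (hθ.isIdempotentElem_theta_idem hE hinv hcentral he),
      hθ.theta_idem_self_mul hE hinv hcentral a he he]
  · rw [hθ.mul_theta_mul, hE _ _ _ (isIdempotentElem_mul_inv hinv a) he]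

end IsPentagonSolution

end

theorem pentagon_clifford_idempotent_invariant_theta_formula_general
    {S : Type*} [Semigroup S] (inv : S → S)
    (hinv1 : ∀ a : S, a * inv a * a = a)
    (hinvcomm : ∀ a : S, a * inv a = inv a * a)
    (hcentral : ∀ e : S, e * e = e → ∀ a : S, e * a = a * e)
    (θ : S → S → S)
    (P1 : ∀ a b c : S, θ a b * θ (a * b) c = θ a (b * c))
    (P2 : ∀ a b c : S, θ (θ a b) (θ (a * b) c) = θ b c)
    (hEinv : ∀ a e f : S, e * e = e → f * f = f → θ a e = θ a f) :
    (∀ a b e : S, e * e = e →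
      θ e (a * b) = θ e a * inv (θ e a) * θ e (a * b)) ∧
    (∀ a b e : S, e * e = e →
      θ a b = inv (θ e a) * θ e (a * b)) := by
  have hθ : IsPentagonSolution θ := ⟨P1, P2⟩
  refine ⟨fun a b e he => ?_, fun a b e he => ?_⟩
  · rw [hinvcomm, hθ.inv_theta_mul_theta hEinv hinv1 hinvcomm hcentral a he,
      hθ.theta_idem_self_mul hEinv hinv1 hcentral (a * b) he he]
  · calc θ a b = θ e e * θ (e * a) b := by
          rw [hθ.theta_idem_mul_left hEinv hinv1 hcentral a b he,
            hθ.theta_idem_mul_theta hEinv hinv1 hcentral a b he]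
      _ = inv (θ e a) * θ e (a * b) := by
          rw [← hθ.inv_theta_mul_theta hEinv hinv1 hinvcomm hcentral a he, mul_assoc,
            hθ.mul_theta_mul]

theorem pentagon_clifford_idempotent_invariant_theta_formula
    {S : Type*} [Semigroup S] (inv : S → S)
    (hinv1 : ∀ a : S, a * inv a * a = a)
    (hinv2 : ∀ a : S, inv a * a * inv a = inv a)
    (hinvcomm : ∀ a : S, a * inv a = inv a * a)
    (hcentral : ∀ e : S, e * e = e → ∀ a : S, e * a = a * e)
    (θ : S → S → S)
    (P1 : ∀ a b c : S, θ a b * θ (a * b) c = θ a (b * c))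
    (P2 : ∀ a b c : S, θ (θ a b) (θ (a * b) c) = θ b c)
    (hEinv : ∀ a e f : S, e * e = e → f * f = f → θ a e = θ a f) :
    (∀ a b e : S, e * e = e →
      θ e (a * b) = θ e a * inv (θ e a) * θ e (a * b)) ∧
    (∀ a b e : S, e * e = e →
      θ a b = inv (θ e a) * θ e (a * b)) :=
  pentagon_clifford_idempotent_invariant_theta_formula_general inv hinv1 hinvcomm hcentral θ P1 P2
    hEinv
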